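/- arXiv:1003.2081 — 2 statements merged into one kernel-verified Lean document; each statement's English description precedes it below -/
import Mathlib

section
/- (Claim 5.3) The function ℓ is multiplicative: ℓ(a·b) = ℓ(a)·ℓ(b) for all a, b ∈ 𝒜. -/
/-- The smallest congruence on the free magma on one generator containing
all instances of the medial law `(w⊕x)⊕(y⊕z) = (w⊕y)⊕(x⊕z)`. -/
inductive MedialRel : FreeMagma PUnit → FreeMagma PUnit → Prop
  | medial (w x y z : FreeMagma PUnit) :
      MedialRel ((w * x) * (y * z)) ((w * y) * (x * z))
  | refl (a : FreeMagma PUnit) : MedialRel a a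
  | symm {a b : FreeMagma PUnit} : MedialRel a b → MedialRel b a
  | trans {a b c : FreeMagma PUnit} : MedialRel a b → MedialRel b c → MedialRel a c
  | mul {a b c d : FreeMagma PUnit} :
      MedialRel a b → MedialRel c d → MedialRel (a * c) (b * d)

/-- The noncommutative natural numbers `𝒜 := M/∼`. -/
def NCN : Type := Quot MedialRel

/-- The induced binary operation `⊕` on `𝒜`. -/
def NCN.oplus : NCN → NCN → NCN :=
  Quot.map₂ (· * ·) (fun a _ _ h => MedialRel.mul (MedialRel.refl a) h)
    (fun _ _ b h => MedialRel.mul h (MedialRel.refl b))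

/-- The class of the generator `1` in `𝒜`. -/
def NCN.one : NCN := Quot.mk _ (FreeMagma.of PUnit.unit)

/-- Substitution multiplication on `M`: `a · b` is the image of `a` under the unique
magma homomorphism `M → M` sending the generator to `b`. -/
def FreeMagma.subMul (a b : FreeMagma PUnit) : FreeMagma PUnit :=
  (FreeMagma.lift fun _ => b) a

theorem MedialRel.subMul_left {a a' : FreeMagma PUnit} (b : FreeMagma PUnit)
    (h : MedialRel a a') : MedialRel (a.subMul b) (a'.subMul b) := by
  induction h with
  | medial w x y z =>
      simp only [FreeMagma.subMul, map_mul]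
      exact MedialRel.medial _ _ _ _
  | refl a => exact MedialRel.refl _
  | symm _ ih => exact MedialRel.symm ih
  | trans _ _ ih1 ih2 => exact MedialRel.trans ih1 ih2
  | mul _ _ ih1 ih2 =>
      simp only [FreeMagma.subMul, map_mul] at *
      exact MedialRel.mul ih1 ih2

theorem MedialRel.subMul_right (a : FreeMagma PUnit) {b b' : FreeMagma PUnit}
    (h : MedialRel b b') : MedialRel (a.subMul b) (a.subMul b') := by
  induction a with
  | ih1 u => simpa [FreeMagma.subMul] using h
  | ih2 x y ihx ihy =>
      simp only [FreeMagma.subMul, map_mul] at *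
      exact MedialRel.mul ihx ihy

/-- The induced multiplication on `𝒜`. -/
def NCN.mul : NCN → NCN → NCN :=
  Quot.map₂ FreeMagma.subMul (fun a _ _ h => MedialRel.subMul_right a h)
    (fun _ _ b h => MedialRel.subMul_left b h)

/-!
Right multiplication by `b` is substitution of `b` for the generator, a magma homomorphism; so
`1 · b = b` and `(x ⊕ y) · b = (x · b) ⊕ (y · b)` hold already on representatives. Since `𝒜` is
generated by `1` under `⊕`, induction on `a` reduces `ℓ(a · b) = ℓ(a) ℓ(b)` to right distributivity
in `ℤ[q]`.
-/

namespace NCN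

@[elab_as_elim]
theorem induction_on {P : NCN → Prop} (a : NCN) (one : P NCN.one)
    (oplus : ∀ x y, P x → P y → P (NCN.oplus x y)) : P a := by
  obtain ⟨a⟩ := a
  induction a with
  | ih1 => exact one
  | ih2 x y ihx ihy => exact oplus (Quot.mk _ x) (Quot.mk _ y) ihx ihy

theorem one_mul (b : NCN) : NCN.mul NCN.one b = b := by
  obtain ⟨b⟩ := b
  rfl

theorem oplus_mul (x y b : NCN) :
    NCN.mul (NCN.oplus x y) b = NCN.oplus (NCN.mul x b) (NCN.mul y b) := by
  obtain ⟨x⟩ := x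
  obtain ⟨y⟩ := y
  obtain ⟨b⟩ := b
  rfl

theorem map_mul_of_map_oplus {R : Type*} [Semiring R] (f : NCN → R) (c : R)
    (hone : f NCN.one = 1) (hoplus : ∀ a b, f (NCN.oplus a b) = f a + c * f b)
    (a b : NCN) : f (NCN.mul a b) = f a * f b := by
  induction a using NCN.induction_on with
  | one => rw [one_mul, hone, _root_.one_mul]
  | oplus x y ihx ihy => rw [oplus_mul, hoplus, hoplus, ihx, ihy, add_mul, mul_assoc]

end NCN

/-- Claim 5.3: the function `ℓ` is multiplicative. -/
theorem ncn_ell_multiplicative (ell : NCN → Polynomial ℤ)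
    (hone : ell NCN.one = 1)
    (hoplus : ∀ a b : NCN, ell (NCN.oplus a b) = ell a + Polynomial.X * ell b) (a b : NCN) :
    ell (NCN.mul a b) = ell a * ell b :=
  NCN.map_mul_of_map_oplus ell Polynomial.X hone hoplus a b
end

section
/- (Definition/Claim 5.5) There exists a unique function ℓₐ : 𝒜 → ℤ[q] satisfying ℓₐ(1) = 1 and ℓₐ(a⊕b) = (1+q)·ℓₐ(a) + (1−q)·ℓₐ(b) for all a, b ∈ 𝒜, and this function is multiplicative: ℓₐ(a·b) = ℓₐ(a)·ℓₐ(b) for all a, b ∈ 𝒜. -/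
/-!
`ℓₐ` is forced by the recursion on representatives in the free magma, and it descends to `𝒜`
because `(x, y) ↦ s x + t y` is a medial operation on any commutative ring. Substitution
replaces every leaf of `a` by `b`, and the recursion is linear in the value at the leaves,
so `ℓₐ (a · b) = ℓₐ a * ℓₐ b`.
-/

namespace FreeMagma

variable {R : Type*} [CommRing R] (s t : R)

noncomputable def weightedSize : FreeMagma PUnit → R :=
  FreeMagma.rec (fun _ => 1) (fun _ _ wx wy => s * wx + t * wy)

theorem weightedSize_of (u : PUnit) : weightedSize s t (of u) = 1 := rfl

theorem weightedSize_mul (x y : FreeMagma PUnit) :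
    weightedSize s t (x * y) = s * weightedSize s t x + t * weightedSize s t y := rfl

theorem subMul_of (u : PUnit) (b : FreeMagma PUnit) : (of u).subMul b = b := rfl

theorem subMul_mul (x y b : FreeMagma PUnit) :
    (x * y).subMul b = x.subMul b * y.subMul b :=
  map_mul _ x y

theorem weightedSize_subMul (a b : FreeMagma PUnit) :
    weightedSize s t (a.subMul b) = weightedSize s t a * weightedSize s t b := by
  induction a with
  | ih1 u => rw [subMul_of, weightedSize_of, one_mul]
  | ih2 x y ihx ihy =>
      rw [subMul_mul, weightedSize_mul, weightedSize_mul, ihx, ihy]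
      ring

end FreeMagma

open FreeMagma

theorem MedialRel.weightedSize_eq {R : Type*} [CommRing R] (s t : R)
    {a b : FreeMagma PUnit} (h : MedialRel a b) : weightedSize s t a = weightedSize s t b := by
  induction h with
  | medial w x y z => simp only [weightedSize_mul]; ring
  | refl a => rfl
  | symm _ ih => exact ih.symm
  | trans _ _ ih₁ ih₂ => exact ih₁.trans ih₂
  | mul _ _ ih₁ ih₂ => rw [weightedSize_mul, weightedSize_mul, ih₁, ih₂]

namespace NCN

def mk : FreeMagma PUnit → NCN := Quot.mk _

theorem ind {p : NCN → Prop} (mk : ∀ a, p (mk a)) (x : NCN) : p x := Quot.ind mk x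

theorem oplus_mk (a b : FreeMagma PUnit) : oplus (mk a) (mk b) = mk (a * b) := rfl

theorem mul_mk (a b : FreeMagma PUnit) : NCN.mul (mk a) (mk b) = mk (a.subMul b) := rfl

variable {R : Type*} [CommRing R] (s t : R)

noncomputable def weightedSize : NCN → R :=
  Quot.lift (FreeMagma.weightedSize s t) fun _ _ h => h.weightedSize_eq s t

theorem weightedSize_one : weightedSize s t one = 1 := rfl

theorem weightedSize_oplus (a b : NCN) :
    weightedSize s t (oplus a b) = s * weightedSize s t a + t * weightedSize s t b := by
  induction a using NCN.ind
  induction b using NCN.ind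
  rfl

theorem weightedSize_mul (a b : NCN) :
    weightedSize s t (NCN.mul a b) = weightedSize s t a * weightedSize s t b := by
  induction a using NCN.ind
  induction b using NCN.ind
  rw [mul_mk]
  exact FreeMagma.weightedSize_subMul s t _ _

variable {s t}

theorem eq_weightedSize {f : NCN → R} (h_one : f one = 1)
    (h_oplus : ∀ a b, f (oplus a b) = s * f a + t * f b) : f = weightedSize s t := by
  funext a
  induction a using NCN.ind with | mk m =>
  induction m with
  | ih1 u => exact h_one
  | ih2 x y ihx ihy => rw [← oplus_mk, h_oplus, ihx, ihy, weightedSize_oplus]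

end NCN

/-- Definition/Claim 5.5: there is a unique function `ℓₐ : 𝒜 → ℤ[q]`
with `ℓₐ(1) = 1` and `ℓₐ(a⊕b) = (1+q)·ℓₐ(a) + (1−q)·ℓₐ(b)`, and it is multiplicative. -/
theorem ncn_exists_unique_ell_a_and_multiplicative :
    (∃! ella : NCN → Polynomial ℤ,
        ella NCN.one = 1 ∧
        ∀ a b : NCN, ella (NCN.oplus a b) =
          (1 + Polynomial.X) * ella a + (1 - Polynomial.X) * ella b) ∧
    (∀ ella : NCN → Polynomial ℤ,
        (ella NCN.one = 1 ∧
          ∀ a b : NCN, ella (NCN.oplus a b) =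
            (1 + Polynomial.X) * ella a + (1 - Polynomial.X) * ella b) →
        ∀ a b : NCN, ella (NCN.mul a b) = ella a * ella b) := by
  constructor
  · exact ⟨NCN.weightedSize _ _, ⟨NCN.weightedSize_one _ _, NCN.weightedSize_oplus _ _⟩,
      fun f hf => NCN.eq_weightedSize hf.1 hf.2⟩
  · rintro f ⟨h_one, h_oplus⟩
    rw [NCN.eq_weightedSize h_one h_oplus]
    exact NCN.weightedSize_mul _ _
end
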